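/- arXiv:2109.14809 — 2 statements merged into one kernel-verified Lean document; each statement's English description precedes it below -/
import Mathlib

section
/- Let n ≥ 2, k ≥ 1, R ∈ (-1,1), and suppose ψ solves ψ'(r) = (1/(k(1-r²)))·(ψ(r)²+1)·((n-1)(r-R)·ψ(r) + √(1-r²)) on (a,1) and extends continuously to r = 1. Then ψ(1) = 0, and if V'(r) = ψ(r)/(k√(1-r²)) extends continuously to r = 1, then V'(1) = -1/(k(k + (n-1)(1-R))). -/
/-!
Near `r = 1` the equation gives `(1 - r) ψ' → (ψ(1)² + 1)(n - 1)(1 - R) ψ(1) / (2k)`. If this limit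
were nonzero, `ψ'` would dominate a multiple of `1 / (1 - r)` and `ψ` would diverge like
`log (1 - r)`; hence `ψ(1) = 0`. Then `V'(1) = lim ψ / (k√(1 - r²))` is a `0/0` limit, and
l'Hôpital's rule turns it into the linear equation `L = -((n - 1)(1 - R) k L + 1) / k²`.
-/

open Real Set Filter

/-- Right-hand side of the first-order soliton ODE:
`ψ\x27(r) = (1/(k(1-r²)))·(ψ(r)²+1)·((n-1)(r-R)·ψ(r) + √(1-r²))`. -/
noncomputable def solitonRHS (n k : ℕ) (R y r : ℝ) : ℝ :=
  (1 / ((k : ℝ) * (1 - r ^ 2))) * (y ^ 2 + 1) *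
    (((n : ℝ) - 1) * (r - R) * y + Real.sqrt (1 - r ^ 2))

open Topology

lemma tendsto_log_sub_nhdsLT (b : ℝ) : Tendsto (fun r => log (b - r)) (𝓝[<] b) atBot := by
  refine tendsto_log_nhdsGT_zero.comp
    (tendsto_nhdsWithin_of_tendsto_nhds_of_eventually_within _ ?_ ?_)
  · exact ((continuous_const.sub continuous_id).tendsto' b 0 (sub_self b)).mono_left
      nhdsWithin_le_nhds
  · filter_upwards [self_mem_nhdsWithin] with r (hr : r < b)
    exact sub_pos.2 hr

section BlowUp

variable {f f' : ℝ → ℝ} {b : ℝ}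

lemma tendsto_atTop_of_div_sub_le_deriv {B : ℝ} (hB : 0 < B)
    (hf : ∀ᶠ r in 𝓝[<] b, HasDerivAt f (f' r) r ∧ B / (b - r) ≤ f' r) :
    Tendsto f (𝓝[<] b) atTop := by
  obtain ⟨l, hlb : l < b, hl⟩ := mem_nhdsLT_iff_exists_Ioo_subset.1 hf
  set g : ℝ → ℝ := fun r => f r + B * log (b - r)
  have hg : ∀ r ∈ Ioo l b, HasDerivAt g (f' r - B / (b - r)) r := by
    intro r hr
    have hbr : b - r ≠ 0 := sub_ne_zero.2 hr.2.ne'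
    refine ((hl hr).1.add ((((hasDerivAt_id r).const_sub b).log hbr).const_mul B)).congr_deriv ?_
    simp only [id]
    ring
  have hmono : MonotoneOn g (Ioo l b) := by
    refine monotoneOn_of_hasDerivWithinAt_nonneg (f' := fun r => f' r - B / (b - r))
      (convex_Ioo l b)
      (fun r hr => (hg r hr).continuousAt.continuousWithinAt) ?_ ?_ <;>
      rw [interior_Ioo]
    · exact fun r hr => (hg r hr).hasDerivWithinAt
    · exact fun r hr => sub_nonneg.2 (hl hr).2
  obtain ⟨r₁, hr₁⟩ := nonempty_Ioo.2 hlb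
  have hlower : Tendsto (fun r => g r₁ - B * log (b - r)) (𝓝[<] b) atTop :=
    tendsto_atTop_add_const_left _ _
      (tendsto_neg_atBot_atTop.comp ((tendsto_log_sub_nhdsLT b).const_mul_atBot hB))
  refine tendsto_atTop_mono' _ ?_ hlower
  filter_upwards [Ioo_mem_nhdsLT hr₁.2] with r hr
  have := hmono hr₁ ⟨hr₁.1.trans hr.1, hr.2⟩ hr.1.le
  simp only [g] at this ⊢
  linarith

lemma nonpos_of_tendsto_sub_mul_deriv {c A : ℝ} (hf : ∀ᶠ r in 𝓝[<] b, HasDerivAt f (f' r) r)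
    (hc : Tendsto f (𝓝[<] b) (𝓝 c)) (hA : Tendsto (fun r => (b - r) * f' r) (𝓝[<] b) (𝓝 A)) :
    A ≤ 0 := by
  by_contra! hApos
  refine not_tendsto_nhds_of_tendsto_atTop
    (tendsto_atTop_of_div_sub_le_deriv (f' := f') (half_pos hApos) ?_) c hc
  filter_upwards [hf, hA.eventually (lt_mem_nhds (half_lt_self hApos)), self_mem_nhdsWithin]
    with r hr hlt (hrb : r < b)
  refine ⟨hr, ?_⟩
  rw [div_le_iff₀' (sub_pos.2 hrb)]
  exact hlt.le

lemma eq_zero_of_tendsto_sub_mul_deriv {c A : ℝ} (hf : ∀ᶠ r in 𝓝[<] b, HasDerivAt f (f' r) r)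
    (hc : Tendsto f (𝓝[<] b) (𝓝 c)) (hA : Tendsto (fun r => (b - r) * f' r) (𝓝[<] b) (𝓝 A)) :
    A = 0 := by
  refine le_antisymm (nonpos_of_tendsto_sub_mul_deriv hf hc hA) ?_
  have hneg : Tendsto (fun r => (b - r) * -f' r) (𝓝[<] b) (𝓝 (-A)) := by
    simpa only [mul_neg] using hA.neg
  simpa using nonpos_of_tendsto_sub_mul_deriv (hf.mono fun r hr => hr.neg) hc.neg hneg

end BlowUp

lemma hasDerivAt_sqrt_one_sub_sq {r : ℝ} (hr : r ∈ Ioo (-1) 1) :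
    HasDerivAt (fun x => √(1 - x ^ 2)) (-r / √(1 - r ^ 2)) r := by
  have hpos : 0 < 1 - r ^ 2 := by nlinarith [hr.1, hr.2]
  refine (((hasDerivAt_pow 2 r).const_sub 1).sqrt hpos.ne').congr_deriv ?_
  field_simp
  ring

lemma tendsto_sqrt_one_sub_sq_nhdsLT_one : Tendsto (fun r => √(1 - r ^ 2)) (𝓝[<] 1) (𝓝 0) := by
  have h : Continuous fun r : ℝ => √(1 - r ^ 2) := by fun_prop
  simpa using (h.tendsto 1).mono_left nhdsWithin_le_nhds

section Soliton

variable {n k : ℕ} {R : ℝ} {ψ : ℝ → ℝ}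

lemma one_sub_mul_solitonRHS (y : ℝ) {r : ℝ} (hr : r ≠ 1) :
    (1 - r) * solitonRHS n k R y r =
      (y ^ 2 + 1) * ((n - 1) * (r - R) * y + √(1 - r ^ 2)) / (k * (1 + r)) := by
  have h1r : 1 - r ≠ 0 := sub_ne_zero.2 hr.symm
  rw [solitonRHS, show (k : ℝ) * (1 - r ^ 2) = (1 - r) * (k * (1 + r)) by ring]
  field_simp

lemma tendsto_one_sub_mul_solitonRHS (hk : k ≠ 0) {c : ℝ} (hψ : Tendsto ψ (𝓝[<] 1) (𝓝 c)) :
    Tendsto (fun r => (1 - r) * solitonRHS n k R (ψ r) r) (𝓝[<] 1)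
      (𝓝 ((c ^ 2 + 1) * ((n - 1) * (1 - R) * c) / (2 * k))) := by
  have hr : Tendsto (fun r : ℝ => r) (𝓝[<] 1) (𝓝 1) := tendsto_id.mono_left nhdsWithin_le_nhds
  have hlim : Tendsto (fun r => (ψ r ^ 2 + 1) * ((n - 1) * (r - R) * ψ r + √(1 - r ^ 2)) /
      (k * (1 + r))) (𝓝[<] 1) (𝓝 ((c ^ 2 + 1) * ((n - 1) * (1 - R) * c + 0) / (k * (1 + 1)))) :=
    (((hψ.pow 2).add_const 1).mul (((hr.sub_const R).const_mul ((n : ℝ) - 1)).mul hψ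
    |>.add tendsto_sqrt_one_sub_sq_nhdsLT_one)).div ((hr.const_add 1).const_mul (k : ℝ))
    (by positivity)
  rw [add_zero, show (k : ℝ) * (1 + 1) = 2 * k by ring] at hlim
  refine hlim.congr' ?_
  filter_upwards [self_mem_nhdsWithin] with r (hr1 : r < 1)
  exact (one_sub_mul_solitonRHS (ψ r) hr1.ne).symm

lemma eq_zero_of_tendsto_of_hasDerivAt_solitonRHS (hn : 1 < n) (hk : k ≠ 0) (hR : R ≠ 1) {c : ℝ}
    (hψ : ∀ᶠ r in 𝓝[<] 1, HasDerivAt ψ (solitonRHS n k R (ψ r) r) r)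
    (hc : Tendsto ψ (𝓝[<] 1) (𝓝 c)) : c = 0 := by
  have h := eq_zero_of_tendsto_sub_mul_deriv hψ hc (tendsto_one_sub_mul_solitonRHS hk hc)
  have hn1 : (n : ℝ) - 1 ≠ 0 := sub_ne_zero.2 (by exact_mod_cast hn.ne')
  have hc2 : c ^ 2 + 1 ≠ 0 := by positivity
  simpa [hk, hn1, hc2, sub_eq_zero, hR.symm] using h

lemma solitonRHS_div_eq (hk : k ≠ 0) (y : ℝ) {r : ℝ} (hr : r ∈ Ioo 0 1) :
    solitonRHS n k R y r / (k * (-r / √(1 - r ^ 2))) =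
      -((y ^ 2 + 1) * ((n - 1) * (r - R) * (k * (y / (k * √(1 - r ^ 2)))) + 1)) / (k ^ 2 * r) := by
  have hpos : 0 < 1 - r ^ 2 := by nlinarith [hr.1, hr.2]
  have hs : 0 < √(1 - r ^ 2) := sqrt_pos.2 hpos
  have hr0 : r ≠ 0 := hr.1.ne'
  rw [solitonRHS]
  field_simp
  rw [sq_sqrt hpos.le]

lemma eq_of_tendsto_div_sqrt_of_hasDerivAt_solitonRHS (hk : k ≠ 0)
    (hden : (k : ℝ) + (n - 1) * (1 - R) ≠ 0) {L : ℝ}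
    (hψ : ∀ᶠ r in 𝓝[<] 1, HasDerivAt ψ (solitonRHS n k R (ψ r) r) r)
    (h0 : Tendsto ψ (𝓝[<] 1) (𝓝 0))
    (hL : Tendsto (fun r => ψ r / (k * √(1 - r ^ 2))) (𝓝[<] 1) (𝓝 L)) :
    L = -(1 / (k * (k + (n - 1) * (1 - R)))) := by
  have hI : ∀ᶠ r in 𝓝[<] (1 : ℝ), r ∈ Ioo 0 1 := Ioo_mem_nhdsLT one_pos
  have hr : Tendsto (fun r : ℝ => r) (𝓝[<] 1) (𝓝 1) := tendsto_id.mono_left nhdsWithin_le_nhds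
  have hquot : Tendsto (fun r => solitonRHS n k R (ψ r) r / (k * (-r / √(1 - r ^ 2)))) (𝓝[<] 1)
      (𝓝 (-((0 ^ 2 + 1) * ((n - 1) * (1 - R) * (k * L) + 1)) / (k ^ 2 * 1))) := by
    refine Tendsto.congr' ?_ ((((h0.pow 2).add_const 1).mul
      ((((hr.sub_const R).const_mul ((n : ℝ) - 1)).mul (hL.const_mul (k : ℝ))).add_const 1)).neg.div
      (hr.const_mul ((k : ℝ) ^ 2)) (by positivity))
    filter_upwards [hI] with r hr
    exact (solitonRHS_div_eq hk (ψ r) hr).symm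
  have hderiv : ∀ᶠ r in 𝓝[<] (1 : ℝ),
      HasDerivAt (fun x => k * √(1 - x ^ 2)) (k * (-r / √(1 - r ^ 2))) r :=
    hI.mono fun r hr => (hasDerivAt_sqrt_one_sub_sq ⟨by linarith [hr.1], hr.2⟩).const_mul (k : ℝ)
  have hderiv_ne : ∀ᶠ r in 𝓝[<] (1 : ℝ), (k : ℝ) * (-r / √(1 - r ^ 2)) ≠ 0 := by
    filter_upwards [hI] with r hr
    have hpos : 0 < 1 - r ^ 2 := by nlinarith [hr.1, hr.2]
    exact mul_ne_zero (by exact_mod_cast hk)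
      (div_ne_zero (neg_ne_zero.2 hr.1.ne') (sqrt_ne_zero'.2 hpos))
  have hlhop := HasDerivAt.lhopital_zero_nhdsLT hψ hderiv hderiv_ne h0
    (by simpa using tendsto_sqrt_one_sub_sq_nhdsLT_one.const_mul (k : ℝ)) hquot
  have hLeq := tendsto_nhds_unique hL hlhop
  field_simp at hLeq ⊢
  linarith

end Soliton

theorem stmt_12_general (n k : ℕ) (hn : 2 ≤ n) (hk : 1 ≤ k) (R a : ℝ)
    (hR : R ∈ Set.Ioo (-1 : ℝ) 1) (ha' : a < 1)
    (ψ : ℝ → ℝ) (hψ : ∀ r ∈ Set.Ioo a (1 : ℝ), HasDerivAt ψ (solitonRHS n k R (ψ r) r) r)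
    (hcont : ContinuousWithinAt ψ (Set.Iio (1 : ℝ)) 1) :
    ψ 1 = 0 ∧
    ∀ L : ℝ, Filter.Tendsto (fun r => ψ r / ((k : ℝ) * Real.sqrt (1 - r ^ 2)))
        (nhdsWithin 1 (Set.Iio (1 : ℝ))) (nhds L) →
      L = -(1 / ((k : ℝ) * ((k : ℝ) + ((n : ℝ) - 1) * (1 - R)))) := by
  have hk0 : k ≠ 0 := by omega
  have hψ' : ∀ᶠ r in 𝓝[<] 1, HasDerivAt ψ (solitonRHS n k R (ψ r) r) r :=
    Filter.mem_of_superset (Ioo_mem_nhdsLT ha') hψ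
  have hψ1 : ψ 1 = 0 :=
    eq_zero_of_tendsto_of_hasDerivAt_solitonRHS hn hk0 hR.2.ne hψ' hcont
  refine ⟨hψ1, fun L hL => eq_of_tendsto_div_sqrt_of_hasDerivAt_solitonRHS hk0 ?_ hψ'
    (hψ1 ▸ hcont) hL⟩
  have hn1 : (0 : ℝ) < n - 1 := sub_pos.2 (by exact_mod_cast hn)
  exact (add_pos (by exact_mod_cast hk) (mul_pos hn1 (sub_pos.2 hR.2))).ne'

theorem stmt_12 (n k : ℕ) (hn : 2 ≤ n) (hk : 1 ≤ k) (R a : ℝ)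
    (hR : R ∈ Set.Ioo (-1 : ℝ) 1) (ha : -1 ≤ a) (ha' : a < 1)
    (ψ : ℝ → ℝ) (hψ : ∀ r ∈ Set.Ioo a (1 : ℝ), HasDerivAt ψ (solitonRHS n k R (ψ r) r) r)
    (hcont : ContinuousWithinAt ψ (Set.Iio (1 : ℝ)) 1) :
    ψ 1 = 0 ∧
    ∀ L : ℝ, Filter.Tendsto (fun r => ψ r / ((k : ℝ) * Real.sqrt (1 - r ^ 2)))
        (nhdsWithin 1 (Set.Iio (1 : ℝ))) (nhds L) →
      L = -(1 / ((k : ℝ) * ((k : ℝ) + ((n : ℝ) - 1) * (1 - R)))) :=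
  stmt_12_general n k hn hk R a hR ha' ψ hψ hcont
end

section
/- Let n ≥ 2, k ≥ 1, R ∈ (-1,1), and let ψ be a maximal solution of ψ'(r) = (1/(k(1-r²)))·(ψ(r)²+1)·((n-1)(r-R)·ψ(r) + √(1-r²)) on a subinterval of (-1,1). If there exists r₀ ∈ (-1,R) with ψ(r₀) < 0, then there exists r₁ ∈ (-1,r₀) such that ψ(r) → -∞ as r ↓ r₁. -/
/-!
Left of `r₀` the solution stays negative: at a zero the equation gives `ψ' = 1/(k√(1-r²)) > 0`,
so `ψ` can only cross zero upwards. Hence `ψ' > 0` on `(a, r₀]`, and with `C = (n-1)(R-r₀)/(2k)`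
the equation yields `(1+r)ψ' ≥ C(-ψ)³`, i.e. `log(1+r) - 1/(2Cψ²)` is nonincreasing; as the
logarithm tends to `-∞` at `-1`, the left endpoint `a` of the interval lies in `(-1, r₀)`. There
the increasing `ψ` either tends to `-∞`, or has a finite limit from which local existence
continues the solution past `a`, contradicting maximality.
-/

open Real Set Filter

open Topology

section ODE

variable {E : Type*} [NormedAddCommGroup E] [NormedSpace ℝ E] [CompleteSpace E]

theorem exists_hasDerivAt_of_contDiffAt_prod {f : ℝ × E → E} {t₀ : ℝ} {x₀ : E}
    (hf : ContDiffAt ℝ 1 f (t₀, x₀)) :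
    ∃ α : ℝ → E, α t₀ = x₀ ∧
      ∃ ε > 0, ∀ t ∈ Ioo (t₀ - ε) (t₀ + ε), HasDerivAt α (f (t, α t)) t := by
  -- Time becomes a coordinate of the autonomous field `(t, x) ↦ (1, f (t, x))`.
  have hV : ContDiffAt ℝ 1 (fun p : ℝ × E => ((1 : ℝ), f p)) (t₀, x₀) :=
    contDiffAt_const.prodMk hf
  obtain ⟨γ, hγ₀, ε, hε, hγ⟩ :=
    hV.exists_forall_mem_closedBall_exists_eq_forall_mem_Ioo_hasDerivAt₀ t₀
  have hfst : ∀ t ∈ Ioo (t₀ - ε) (t₀ + ε), HasDerivAt (fun s => (γ s).1) 1 t := fun t ht => by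
    have h := hasFDerivAt_fst.comp_hasDerivAt t (hγ t ht)
    simp only [Function.comp_def, ContinuousLinearMap.coe_fst'] at h
    exact h
  have htime : EqOn (fun s => (γ s).1) id (Ioo (t₀ - ε) (t₀ + ε)) :=
    isOpen_Ioo.eqOn_of_deriv_eq isPreconnected_Ioo
      (fun t ht => (hfst t ht).differentiableAt.differentiableWithinAt) differentiableOn_id
      (fun t ht => by simp [(hfst t ht).deriv]) (x := t₀) ⟨by linarith, by linarith⟩ (by simp [hγ₀])
  refine ⟨fun s => (γ s).2, by simp [hγ₀], ε, hε, fun t ht => ?_⟩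
  have h := hasFDerivAt_snd.comp_hasDerivAt t (hγ t ht)
  simp only [Function.comp_def, ContinuousLinearMap.coe_snd'] at h
  rwa [show (γ t) = (t, (γ t).2) from Prod.ext (htime ht) rfl] at h

theorem exists_extension_left_of_tendsto {f : ℝ × E → E} {ψ : ℝ → E} {a b : ℝ} {L : E}
    (hab : a < b) (hf : ContDiffAt ℝ 1 f (a, L))
    (hψ : ∀ t ∈ Ioo a b, HasDerivAt ψ (f (t, ψ t)) t) (hlim : Tendsto ψ (𝓝[>] a) (𝓝 L)) :
    ∃ ε > 0, ∃ φ : ℝ → E,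
      EqOn φ ψ (Ioo a b) ∧ ∀ t ∈ Ioo (a - ε) b, HasDerivAt φ (f (t, φ t)) t := by
  classical
  obtain ⟨α, hα₀, ε, hε, hα⟩ := exists_hasDerivAt_of_contDiffAt_prod hf
  set φ := (Iic a).piecewise α ψ
  have hφα : EqOn φ α (Iic a) := fun _ ht => piecewise_eq_of_mem _ _ _ ht
  have hφψ : EqOn φ ψ (Ioi a) := fun _ ht => piecewise_eq_of_notMem _ _ _ (notMem_Iic.2 ht)
  have hφψ' : ∀ t ∈ Ioo a b, HasDerivAt φ (f (t, ψ t)) t := fun t ht =>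
    (hψ t ht).congr_of_eventuallyEq (eventuallyEq_of_mem (Ioi_mem_nhds ht.1) hφψ)
  refine ⟨ε, hε, φ, fun t ht => hφψ ht.1, fun t ht => ?_⟩
  rcases lt_trichotomy t a with hta | rfl | hta
  · rw [hφα hta.le]
    exact (hα t ⟨ht.1, by linarith⟩).congr_of_eventuallyEq
      (eventuallyEq_of_mem (Iic_mem_nhds hta) hφα)
  · rw [hφα self_mem_Iic, hα₀]
    have hleft : HasDerivWithinAt φ (f (t, L)) (Iic t) t := by
      have := (hα t ⟨by linarith, by linarith⟩).hasDerivWithinAt (s := Iic t)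
      rw [hα₀] at this
      exact this.congr hφα (hφα self_mem_Iic)
    have hright : HasDerivWithinAt φ (f (t, L)) (Ici t) t := by
      refine hasDerivWithinAt_Ici_of_tendsto_deriv (s := Ioo t b)
        (fun s hs => (hφψ' s hs).differentiableAt.differentiableWithinAt) ?_
        (Ioo_mem_nhdsGT hab) ?_
      · rw [ContinuousWithinAt, hφα self_mem_Iic, hα₀]
        exact (hlim.mono_left (nhdsWithin_mono _ Ioo_subset_Ioi_self)).congr'
          (eventuallyEq_of_mem self_mem_nhdsWithin fun s hs => (hφψ hs.1).symm)
      · have hpair : Tendsto (fun s => (s, ψ s)) (𝓝[>] t) (𝓝 (t, L)) :=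
          (tendsto_id.mono_left nhdsWithin_le_nhds).prodMk_nhds hlim
        exact (hf.continuousAt.tendsto.comp hpair).congr'
          (eventuallyEq_of_mem (Ioo_mem_nhdsGT hab) fun s hs => ((hφψ' s hs).deriv).symm)
    simpa only [Iic_union_Ici, hasDerivWithinAt_univ] using hleft.union hright
  · rw [hφψ hta]
    exact hφψ' t ⟨hta, ht.2⟩

end ODE

theorem MonotoneOn.exists_tendsto_nhdsGT_of_not_tendsto_atBot {α β : Type*} [LinearOrder α]
    [DenselyOrdered α] [TopologicalSpace α] [OrderTopology α] [ConditionallyCompleteLinearOrder β]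
    [TopologicalSpace β] [OrderTopology β] {f : α → β} {a b : α} (hab : a < b)
    (hf : MonotoneOn f (Ioo a b)) (h : ¬ Tendsto f (𝓝[>] a) atBot) :
    ∃ L, Tendsto f (𝓝[>] a) (𝓝 L) := by
  by_cases hbdd : BddBelow (f '' Ioo a b)
  · exact ⟨_, hf.tendsto_nhdsWithin_Ioo_right (nonempty_Ioo.2 hab) hbdd⟩
  refine absurd (tendsto_atBot.2 fun M => ?_) h
  obtain ⟨_, ⟨x, hx, rfl⟩, hxM⟩ := not_bddBelow_iff.1 hbdd M
  filter_upwards [Ioo_mem_nhdsGT hx.1] with t ht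
  exact (hf ⟨ht.1, ht.2.trans hx.2⟩ hx ht.2.le).trans hxM.le

theorem HasDerivAt.eventually_lt_nhdsGT {f : ℝ → ℝ} {f' x : ℝ} (hf : HasDerivAt f f' x)
    (hf' : 0 < f') : ∀ᶠ t in 𝓝[>] x, f x < f t := by
  filter_upwards [((hasDerivAt_iff_tendsto_slope.1 hf).mono_left (nhdsGT_le_nhdsNE x)).eventually
    (eventually_gt_nhds hf'), self_mem_nhdsWithin] with t hslope ht
  exact (slope_pos_iff_of_le (le_of_lt ht)).1 hslope

theorem neg_of_deriv_pos_of_eq_zero {f f' : ℝ → ℝ} {a b x : ℝ}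
    (hf : ∀ t ∈ Ioc a b, HasDerivAt f (f' t) t) (hzero : ∀ t ∈ Ioc a b, f t = 0 → 0 < f' t)
    (hb : f b < 0) (hx : x ∈ Ioc a b) : f x < 0 := by
  by_contra! hx0
  have hsub : Icc x b ⊆ Ioc a b := fun t ht => ⟨hx.1.trans_le ht.1, ht.2⟩
  set S := Icc x b ∩ f ⁻¹' Ici 0
  have hSbdd : BddAbove S := ⟨b, fun t ht => ht.1.2⟩
  have hS : IsClosed S := ContinuousOn.preimage_isClosed_of_isClosed
    (fun t ht => (hf t (hsub ht)).continuousAt.continuousWithinAt) isClosed_Icc isClosed_Ici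
  set s := sSup S
  have hsS : s ∈ S := hS.csSup_mem ⟨x, ⟨le_rfl, hx.2⟩, hx0⟩ hSbdd
  have hsb : s < b := hsS.1.2.lt_of_ne fun h => (h ▸ hsS.2 : (0 : ℝ) ≤ f b).not_gt hb
  have hright : ∀ᶠ t in 𝓝[>] s, f t < 0 := by
    filter_upwards [Ioc_mem_nhdsGT hsb] with t ht
    by_contra! h
    exact (le_csSup hSbdd ⟨⟨hsS.1.1.trans ht.1.le, ht.2⟩, h⟩).not_gt ht.1
  have hfs := hf s (hsub hsS.1)
  have hs0 : f s = 0 := le_antisymm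
    (le_of_tendsto (hfs.continuousAt.continuousWithinAt) (hright.mono fun _ => le_of_lt)) hsS.2
  obtain ⟨t, hst, hneg⟩ :=
    ((hfs.eventually_lt_nhdsGT (hzero s (hsub hsS.1) hs0)).and hright).exists
  linarith

section Comparison

variable {u u' : ℝ → ℝ} {a b C : ℝ}

theorem antitoneOn_log_one_add_sub_inv (ha : -1 ≤ a) (hC : 0 < C)
    (hu : ∀ x ∈ Ioc a b, HasDerivAt u (u' x) x) (hneg : ∀ x ∈ Ioc a b, u x < 0)
    (hineq : ∀ x ∈ Ioc a b, C * (-u x) ^ 3 ≤ (1 + x) * u' x) :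
    AntitoneOn (fun x => log (1 + x) - (2 * C * u x ^ 2)⁻¹) (Ioc a b) := by
  have hderiv : ∀ x ∈ Ioc a b, HasDerivAt (fun x => log (1 + x) - (2 * C * u x ^ 2)⁻¹)
      (1 / (1 + x) + u' x / (C * u x ^ 3)) x := by
    intro x hx
    have h1x : 0 < 1 + x := by linarith [hx.1]
    have hux := (hneg x hx).ne
    have hden : 2 * C * u x ^ 2 ≠ 0 := by positivity
    refine (((hasDerivAt_id x).const_add 1).log h1x.ne').sub
      ((((hu x hx).pow 2).const_mul (2 * C)).inv hden) |>.congr_deriv ?_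
    simp only [id, Pi.pow_apply]
    field_simp
    ring
  refine antitoneOn_of_hasDerivWithinAt_nonpos (convex_Ioc a b)
    (fun x hx => (hderiv x hx).continuousAt.continuousWithinAt)
    (fun x hx => (hderiv x (interior_subset hx)).hasDerivWithinAt) fun x hx => ?_
  replace hx := interior_subset hx
  have h1x : 0 < 1 + x := by linarith [hx.1]
  have hCu : C * u x ^ 3 < 0 := mul_neg_of_pos_of_neg hC (Odd.pow_neg (by decide) (hneg x hx))
  rw [div_add_div _ _ h1x.ne' hCu.ne]
  refine div_nonpos_of_nonneg_of_nonpos ?_ (mul_neg_of_pos_of_neg h1x hCu).le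
  linarith [hineq x hx, show C * (-u x) ^ 3 = -(C * u x ^ 3) by ring]

theorem neg_one_lt_of_cube_le_mul_deriv (ha : -1 ≤ a) (hab : a < b) (hC : 0 < C)
    (hu : ∀ x ∈ Ioc a b, HasDerivAt u (u' x) x) (hneg : ∀ x ∈ Ioc a b, u x < 0)
    (hineq : ∀ x ∈ Ioc a b, C * (-u x) ^ 3 ≤ (1 + x) * u' x) : -1 < a := by
  have hanti := antitoneOn_log_one_add_sub_inv ha hC hu hneg hineq
  set c := (1 + b) * exp (-(2 * C * u b ^ 2)⁻¹)
  have hc : 0 < c := mul_pos (by linarith) (exp_pos _)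
  have hbound : ∀ x ∈ Ioc a b, c ≤ 1 + x := by
    intro x hx
    have h1x : 0 < 1 + x := by linarith [hx.1]
    have hFx := hanti hx ⟨hab, le_rfl⟩ hx.2
    have hinv : 0 ≤ (2 * C * u x ^ 2)⁻¹ := by positivity
    rw [← log_le_log_iff hc h1x, log_mul (by linarith) (exp_pos _).ne', log_exp]
    simp only at hFx
    linarith
  by_contra! ha'
  have hx : min b (-1 + c / 2) ∈ Ioc a b :=
    ⟨lt_min hab (by linarith), min_le_left _ _⟩
  linarith [hbound _ hx, min_le_right b (-1 + c / 2)]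

end Comparison

section Soliton

variable {n k : ℕ} {R y r : ℝ}

theorem contDiffAt_solitonRHS (hk : k ≠ 0) (hr : 1 - r ^ 2 ≠ 0) :
    ContDiffAt ℝ 1 (fun p : ℝ × ℝ => solitonRHS n k R p.2 p.1) (r, y) := by
  have hden : (k : ℝ) * (1 - r ^ 2) ≠ 0 := mul_ne_zero (Nat.cast_ne_zero.2 hk) hr
  have hsqrt : ContDiffAt ℝ 1 (fun p : ℝ × ℝ => √(1 - p.1 ^ 2)) (r, y) :=
    (contDiffAt_sqrt hr).comp (r, y) (by fun_prop)
  unfold solitonRHS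
  have hdenC : ContDiffAt ℝ 1 (fun p : ℝ × ℝ => (k : ℝ) * (1 - p.1 ^ 2)) (r, y) := by fun_prop
  exact ((contDiffAt_const.div hdenC hden).mul (by fun_prop)).mul
    ((by fun_prop : ContDiffAt ℝ 1 (fun p : ℝ × ℝ => ((n : ℝ) - 1) * (p.1 - R) * p.2) (r, y)).add
      hsqrt)

theorem solitonRHS_pos (hn : 1 ≤ n) (hk : 1 ≤ k) (hr : r ∈ Ioo (-1) 1) (hrR : r ≤ R)
    (hy : y ≤ 0) : 0 < solitonRHS n k R y r := by
  have h1r : 0 < 1 - r ^ 2 := by nlinarith [hr.1, hr.2]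
  have hk' : (0 : ℝ) < k := by exact_mod_cast hk
  have hn' : (0 : ℝ) ≤ n - 1 := by
    have : (1 : ℝ) ≤ n := by exact_mod_cast hn
    linarith
  have hlin : 0 ≤ ((n : ℝ) - 1) * (r - R) * y :=
    mul_nonneg_of_nonpos_of_nonpos (mul_nonpos_of_nonneg_of_nonpos hn' (by linarith)) hy
  unfold solitonRHS
  have := sqrt_pos.2 h1r
  positivity

theorem cube_le_one_add_mul_solitonRHS {r₀ : ℝ} (hn : 1 ≤ n) (hk : 1 ≤ k)
    (hr : r ∈ Ioo (-1) 1) (hrr₀ : r ≤ r₀) (hr₀R : r₀ ≤ R) (hy : y ≤ 0) :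
    ((n : ℝ) - 1) * (R - r₀) / (2 * k) * (-y) ^ 3 ≤ (1 + r) * solitonRHS n k R y r := by
  have hk' : (0 : ℝ) < k := by exact_mod_cast hk
  have h1r : 0 < 1 - r := by linarith [hr.2]
  have hrw : (1 + r) * solitonRHS n k R y r =
      (y ^ 2 + 1) * (((n : ℝ) - 1) * (r - R) * y + √(1 - r ^ 2)) / (k * (1 - r)) := by
    have : (1 : ℝ) + r ≠ 0 := by linarith [hr.1]
    rw [solitonRHS, show (1 : ℝ) - r ^ 2 = (1 - r) * (1 + r) by ring]
    field_simp
  rw [hrw, le_div_iff₀ (mul_pos hk' h1r)]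
  set δ := ((n : ℝ) - 1) * (R - r₀)
  set B := ((n : ℝ) - 1) * (r - R) * y + √(1 - r ^ 2)
  have hn' : (0 : ℝ) ≤ n - 1 := by
    have : (1 : ℝ) ≤ n := by exact_mod_cast hn
    linarith
  have hδ : 0 ≤ δ := mul_nonneg hn' (by linarith)
  have hB : δ * -y ≤ B := by
    have : δ * -y ≤ ((n : ℝ) - 1) * (r - R) * y := by
      nlinarith [mul_le_mul_of_nonneg_left (by linarith : R - r₀ ≤ R - r) hn']
    linarith [sqrt_nonneg (1 - r ^ 2)]
  have hy3 : 0 ≤ δ * (-y) ^ 3 := mul_nonneg hδ (pow_nonneg (neg_nonneg.2 hy) 3)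
  calc δ / (2 * k) * (-y) ^ 3 * (k * (1 - r)) = δ * (-y) ^ 3 * ((1 - r) / 2) := by
        field_simp
    _ ≤ δ * (-y) ^ 3 * 1 := mul_le_mul_of_nonneg_left (by linarith [hr.1]) hy3
    _ = y ^ 2 * (δ * -y) := by ring
    _ ≤ (y ^ 2 + 1) * B :=
        mul_le_mul (by linarith) hB (mul_nonneg hδ (neg_nonneg.2 hy)) (by positivity)

end Soliton

theorem stmt_19_general (n k : ℕ) (hn : 2 ≤ n) (hk : 1 ≤ k) (R a b : ℝ)
    (hab : Set.Ioo a b ⊆ Set.Ioo (-1 : ℝ) 1)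
    (ψ : ℝ → ℝ) (hψ : ∀ r ∈ Set.Ioo a b, HasDerivAt ψ (solitonRHS n k R (ψ r) r) r)
    (hmax : ¬ ∃ (a' : ℝ) (φ : ℝ → ℝ), a' < a ∧ -1 ≤ a' ∧ Set.EqOn φ ψ (Set.Ioo a b) ∧
      ∀ r ∈ Set.Ioo a' b, HasDerivAt φ (solitonRHS n k R (φ r) r) r)
    (r₀ : ℝ) (hr₀ab : r₀ ∈ Set.Ioo a b) (hr₀R : r₀ ∈ Set.Ioo (-1 : ℝ) R)
    (hneg : ψ r₀ < 0) :
    ∃ r₁ ∈ Set.Ioo (-1 : ℝ) r₀,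
      Filter.Tendsto ψ (nhdsWithin r₁ (Set.Ioi r₁)) Filter.atBot := by
  obtain ⟨har₀, hr₀b⟩ := hr₀ab
  have hsub : Ioc a r₀ ⊆ Ioo (-1) 1 := (Ioc_subset_Ioo_right hr₀b).trans hab
  have hψ' : ∀ r ∈ Ioc a r₀, HasDerivAt ψ (solitonRHS n k R (ψ r) r) r :=
    fun r hr => hψ r (Ioc_subset_Ioo_right hr₀b hr)
  have ha : -1 ≤ a := ((Ioo_subset_Ioo_iff har₀).1 (Ioo_subset_Ioc_self.trans hsub)).1
  have hψneg : ∀ r ∈ Ioc a r₀, ψ r < 0 := fun r hr =>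
    neg_of_deriv_pos_of_eq_zero hψ' (fun s hs hs0 => solitonRHS_pos (by omega) hk (hsub hs)
      (hs.2.trans hr₀R.2.le) hs0.le) hneg hr
  have hmono : MonotoneOn ψ (Ioc a r₀) :=
    monotoneOn_of_hasDerivWithinAt_nonneg (convex_Ioc a r₀)
      (fun r hr => (hψ' r hr).continuousAt.continuousWithinAt)
      (fun r hr => (hψ' r (interior_subset hr)).hasDerivWithinAt) fun r hr =>
      have hr := interior_subset hr
      (solitonRHS_pos (by omega) hk (hsub hr) (hr.2.trans hr₀R.2.le) (hψneg r hr).le).le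
  have hC : 0 < ((n : ℝ) - 1) * (R - r₀) / (2 * k) := by
    have : (2 : ℝ) ≤ n := by exact_mod_cast hn
    have : (1 : ℝ) ≤ k := by exact_mod_cast hk
    exact div_pos (mul_pos (by linarith) (by linarith [hr₀R.2])) (by linarith)
  have ha' : -1 < a := neg_one_lt_of_cube_le_mul_deriv ha har₀ hC hψ' hψneg fun r hr =>
    cube_le_one_add_mul_solitonRHS (by omega) hk (hsub hr) hr.2 hr₀R.2.le (hψneg r hr).le
  refine ⟨a, ⟨ha', har₀⟩, ?_⟩
  by_contra hblow
  obtain ⟨L, hL⟩ := (hmono.mono Ioo_subset_Ioc_self).exists_tendsto_nhdsGT_of_not_tendsto_atBot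
    har₀ hblow
  have ha1 : 1 - a ^ 2 ≠ 0 := by nlinarith [(hsub ⟨har₀, le_rfl⟩).2]
  obtain ⟨ε, hε, φ, hφψ, hφ⟩ := exists_extension_left_of_tendsto (har₀.trans hr₀b)
    (contDiffAt_solitonRHS (n := n) (R := R) (by omega) ha1) hψ hL
  exact hmax ⟨max (a - ε) (-1), φ, max_lt (by linarith) ha', le_max_right _ _, hφψ,
    fun r hr => hφ r ⟨(le_max_left _ _).trans_lt hr.1, hr.2⟩⟩

theorem stmt_19 (n k : ℕ) (hn : 2 ≤ n) (hk : 1 ≤ k) (R a b : ℝ)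
    (hR : R ∈ Set.Ioo (-1 : ℝ) 1) (hab : Set.Ioo a b ⊆ Set.Ioo (-1 : ℝ) 1)
    (ψ : ℝ → ℝ) (hψ : ∀ r ∈ Set.Ioo a b, HasDerivAt ψ (solitonRHS n k R (ψ r) r) r)
    (hmax : ¬ ∃ (a' : ℝ) (φ : ℝ → ℝ), a' < a ∧ -1 ≤ a' ∧ Set.EqOn φ ψ (Set.Ioo a b) ∧
      ∀ r ∈ Set.Ioo a' b, HasDerivAt φ (solitonRHS n k R (φ r) r) r)
    (r₀ : ℝ) (hr₀ab : r₀ ∈ Set.Ioo a b) (hr₀R : r₀ ∈ Set.Ioo (-1 : ℝ) R)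
    (hneg : ψ r₀ < 0) :
    ∃ r₁ ∈ Set.Ioo (-1 : ℝ) r₀,
      Filter.Tendsto ψ (nhdsWithin r₁ (Set.Ioi r₁)) Filter.atBot :=
  stmt_19_general n k hn hk R a b hab ψ hψ hmax r₀ hr₀ab hr₀R hneg
end
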